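/- arXiv:2502.15489 — 2 statements merged into one kernel-verified Lean document; each statement's English description precedes it below -/
import Mathlib

section
/- Let n ∈ ℕ with n ≥ 1 and let x_1,…,x_n be real numbers with x_j ≥ 1 for all j. Then ∑_{j=1}^n (1 − x_j)/(1 + x_j) ≤ (1 − ∏_{j=1}^n x_j)/(1 + ∏_{j=1}^n x_j). -/
lemma key (a b : ℝ) (ha : 1 ≤ a) (hb : 1 ≤ b) :
    (1 - a) / (1 + a) + (1 - b) / (1 + b) ≤ (1 - a * b) / (1 + a * b) := by
  have h1 : (0:ℝ) < 1 + a := by linarith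
  have h2 : (0:ℝ) < 1 + b := by linarith
  have h3 : (0:ℝ) < 1 + a * b := by nlinarith
  rw [div_add_div _ _ (ne_of_gt h1) (ne_of_gt h2), div_le_div_iff₀ (by positivity) h3]
  nlinarith [mul_nonneg (sub_nonneg.2 ha) (sub_nonneg.2 hb), sq_nonneg (a-b), sq_nonneg (a*b-1)]

lemma aux (n : ℕ) (x : Fin n → ℝ) (hx : ∀ j, 1 ≤ x j) :
    ∑ j, (1 - x j) / (1 + x j) ≤ (1 - ∏ j, x j) / (1 + ∏ j, x j) := by
  induction n with
  | zero => simp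
  | succ m ih =>
    rw [Fin.sum_univ_succ, Fin.prod_univ_succ]
    have hP : 1 ≤ ∏ j, x (Fin.succ j) := by
      have := Finset.prod_le_prod (s := Finset.univ) (f := fun _ : Fin m => (1:ℝ)) (g := fun j => x (Fin.succ j))
        (fun i _ => zero_le_one) (fun i _ => hx _)
      simpa using this
    calc (1 - x 0) / (1 + x 0) + ∑ j, (1 - x (Fin.succ j)) / (1 + x (Fin.succ j))
        ≤ (1 - x 0) / (1 + x 0) + (1 - ∏ j, x (Fin.succ j)) / (1 + ∏ j, x (Fin.succ j)) := by
          linarith [ih (fun j => x (Fin.succ j)) (fun j => hx _)]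
      _ ≤ _ := key _ _ (hx 0) hP

theorem sum_div_le_prod_div (n : ℕ) (hn : 1 ≤ n) (x : Fin n → ℝ)
    (hx : ∀ j, 1 ≤ x j) :
    ∑ j, (1 - x j) / (1 + x j) ≤ (1 - ∏ j, x j) / (1 + ∏ j, x j) := by
  exact aux n x hx
end

section
/- Let n ∈ ℕ, let a_1,…,a_n ∈ ℂ with |a_j| > 1 for all j, let w(z) = ∏_{j=1}^n (z − a_j) and let B be the associated Blaschke product. Let p be a complex polynomial of degree at most n and set r(z) = p(z)/w(z). Then for every z ∈ ℂ with |z| = 1, |r′(z)| ≤ |B′(z)| · ‖r‖, where ‖r‖ = max_{|ζ| = 1} |r(ζ)|. -/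
open Complex Polynomial

noncomputable def Complex.abs : AbsoluteValue ℂ ℝ := NormedField.toAbsoluteValue ℂ

lemma Complex.norm_eq_abs (z : ℂ) : ‖z‖ = Complex.abs z := rfl

lemma Complex.abs_apply (z : ℂ) : Complex.abs z = Real.sqrt (Complex.normSq z) :=
  Complex.norm_def z

lemma Complex.abs_conj (z : ℂ) : Complex.abs ((starRingEnd ℂ) z) = Complex.abs z :=
  Complex.norm_conj z

lemma Complex.normSq_eq_abs (z : ℂ) : Complex.normSq z = Complex.abs z ^ 2 :=
  Complex.normSq_eq_norm_sq z

lemma Complex.continuous_abs : Continuous Complex.abs := continuous_norm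



-- Re(z/(z-b)) formula consequences
lemma re_div_gt_half {z b : ℂ} (hz : Complex.abs z = 1) (hb : Complex.abs b < 1) :
    1/2 < (z / (z - b)).re := by
  have hzb : z - b ≠ 0 := by
    intro h
    rw [sub_eq_zero] at h
    rw [h] at hz; linarith [hz ▸ hb]
  have h1 : Complex.normSq z = 1 := by
    rw [Complex.normSq_eq_abs, hz]; norm_num
  have h2 : Complex.normSq b < 1 := by
    rw [Complex.normSq_eq_abs]; nlinarith [Complex.abs.nonneg b]
  have h3 : 0 < Complex.normSq (z - b) := Complex.normSq_pos.mpr hzb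
  rw [Complex.div_re, ← add_div, lt_div_iff₀ h3]
  simp only [Complex.normSq_apply, Complex.sub_re, Complex.sub_im] at *
  nlinarith [h1, h2]

lemma re_div_lt_half {z a : ℂ} (hz : Complex.abs z = 1) (hb : 1 < Complex.abs a) :
    (z / (z - a)).re < 1/2 := by
  have hzb : z - a ≠ 0 := by
    intro h
    rw [sub_eq_zero] at h
    rw [h] at hz; linarith [hz ▸ hb]
  have h1 : Complex.normSq z = 1 := by
    rw [Complex.normSq_eq_abs, hz]; norm_num
  have h2 : 1 < Complex.normSq a := by
    rw [Complex.normSq_eq_abs]; nlinarith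
  have h3 : 0 < Complex.normSq (z - a) := Complex.normSq_pos.mpr hzb
  rw [Complex.div_re, ← add_div, div_lt_iff₀ h3]
  simp only [Complex.normSq_apply, Complex.sub_re, Complex.sub_im] at *
  nlinarith [h1, h2]

-- |1 - conj(a) z| = |z - a| on the circle
lemma abs_one_sub_conj_mul {z a : ℂ} (hz : Complex.abs z = 1) :
    Complex.abs (1 - (starRingEnd ℂ) a * z) = Complex.abs (z - a) := by
  have h : 1 - (starRingEnd ℂ) a * z = z * (starRingEnd ℂ) (z - a) := by
    have hn : (Complex.normSq z : ℂ) = 1 := by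
      rw [Complex.normSq_eq_abs, hz]; norm_num
    rw [map_sub, mul_sub, Complex.mul_conj, hn]; ring
  rw [h, map_mul, hz, Complex.abs_conj, one_mul]


lemma eval_prod_multiset_ne_zero (M : Multiset ℂ) (z : ℂ) (h : ∀ b ∈ M, z - b ≠ 0) :
    ((M.map fun b => X - C b).prod).eval z ≠ 0 := by
  rw [Polynomial.eval_multiset_prod, Multiset.map_map]
  refine Multiset.prod_ne_zero ?_
  simp only [Multiset.mem_map, Function.comp_apply, eval_sub, eval_X, eval_C]
  rintro ⟨b, hb, hb0⟩
  exact h b hb hb0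

lemma eval_derivative_multiset (M : Multiset ℂ) (z : ℂ) (h : ∀ b ∈ M, z - b ≠ 0) :
    (derivative ((M.map fun b => X - C b).prod)).eval z =
      ((M.map fun b => X - C b).prod).eval z * (M.map fun b => (z - b)⁻¹).sum := by
  induction M using Multiset.induction_on with
  | empty => simp
  | cons b M ih =>
    have hb : z - b ≠ 0 := h b (Multiset.mem_cons_self b M)
    have hM : ∀ x ∈ M, z - x ≠ 0 := fun x hx => h x (Multiset.mem_cons_of_mem hx)
    simp only [Multiset.map_cons, Multiset.prod_cons, Multiset.sum_cons,
      derivative_mul, derivative_sub, derivative_X, derivative_C, sub_zero, one_mul,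
      eval_add, eval_mul, eval_sub, eval_X, eval_C, ih hM]
    field_simp

lemma multiset_card_mul_lt_sum {M : Multiset ℝ} {c : ℝ} (h : ∀ x ∈ M, c < x) (hM : M ≠ 0) :
    (M.card : ℝ) * c < M.sum := by
  induction M using Multiset.induction_on with
  | empty => exact absurd rfl hM
  | cons b M ih =>
    have hb : c < b := h b (Multiset.mem_cons_self b M)
    have hM' : ∀ x ∈ M, c ≤ x := fun x hx => le_of_lt (h x (Multiset.mem_cons_of_mem hx))
    have := Multiset.card_nsmul_le_sum hM'
    rw [nsmul_eq_mul] at this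
    simp only [Multiset.card_cons, Multiset.sum_cons]
    push_cast
    nlinarith

lemma multiset_sum_le_card_mul {M : Multiset ℝ} {c : ℝ} (h : ∀ x ∈ M, x ≤ c) :
    M.sum ≤ (M.card : ℝ) * c := by
  have := Multiset.sum_le_card_nsmul M c h
  rwa [nsmul_eq_mul] at this


lemma multiset_re_sum (M : Multiset ℂ) : M.sum.re = (M.map Complex.re).sum := by
  rw [← Complex.coe_reAddGroupHom, ← map_multiset_sum]

lemma key_nonvanishing (n : ℕ) (hn : 1 ≤ n) (a : Fin n → ℂ)
    (ha : ∀ j, 1 < Complex.abs (a j))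
    (q : Polynomial ℂ) (hq : q.natDegree = n)
    (hroots : ∀ v, q.eval v = 0 → Complex.abs v < 1)
    (z : ℂ) (hz : Complex.abs z = 1) :
    (derivative q).eval z * (∏ j, (X - C (a j)) : Polynomial ℂ).eval z ≠
      q.eval z * (derivative (∏ j, (X - C (a j)) : Polynomial ℂ)).eval z := by
  set W : Polynomial ℂ := ∏ j, (X - C (a j)) with hW
  set A : Multiset ℂ := Multiset.map a Finset.univ.val with hA
  have hAcard : A.card = n := by simp [hA]
  have hWa : W = (A.map fun b => X - C b).prod := by
    rw [hW, Finset.prod_eq_multiset_prod, hA, Multiset.map_map]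
    rfl
  have hAmem : ∀ b ∈ A, 1 < Complex.abs b := by
    intro b hb
    obtain ⟨j, _, rfl⟩ := Multiset.mem_map.mp hb
    exact ha j
  have hAz : ∀ b ∈ A, z - b ≠ 0 := by
    intro b hb h0
    rw [sub_eq_zero] at h0
    rw [h0] at hz
    exact absurd hz (ne_of_lt (hAmem b hb)).symm
  -- roots of q
  have hsplit : Splits q := IsAlgClosed.splits q
  set R : Multiset ℂ := q.roots with hR
  have hq0 : q ≠ 0 := by
    intro h0; rw [h0] at hq; simp at hq; omega
  have hRcard : R.card = n := by
    rw [hR, (Polynomial.splits_iff_card_roots).mp hsplit, hq]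
  have hRmem : ∀ b ∈ R, Complex.abs b < 1 := by
    intro b hb
    exact hroots b ((Polynomial.mem_roots hq0).mp hb)
  have hRz : ∀ b ∈ R, z - b ≠ 0 := by
    intro b hb h0
    rw [sub_eq_zero] at h0
    rw [h0] at hz
    exact absurd hz (ne_of_lt (hRmem b hb))
  have hfac : q = C q.leadingCoeff * (R.map fun b => X - C b).prod :=
    hsplit.eq_prod_roots
  have hc : q.leadingCoeff ≠ 0 := Polynomial.leadingCoeff_ne_zero.mpr hq0
  -- evaluations
  have hqz : q.eval z ≠ 0 := by
    intro h0
    exact absurd hz (ne_of_lt (hroots z h0))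
  have hWz : W.eval z ≠ 0 := by
    rw [hWa]; exact eval_prod_multiset_ne_zero A z hAz
  set SR : ℂ := (R.map fun b => (z - b)⁻¹).sum with hSR
  set SA : ℂ := (A.map fun b => (z - b)⁻¹).sum with hSA
  have hq' : (derivative q).eval z = q.eval z * SR := by
    conv_lhs => rw [hfac]
    rw [Polynomial.derivative_C_mul, eval_mul, eval_C,
      eval_derivative_multiset R z hRz]
    conv_rhs => rw [hfac]
    rw [eval_mul, eval_C]; ring
  have hW' : (derivative W).eval z = W.eval z * SA := by
    conv_lhs => rw [hWa]
    rw [eval_derivative_multiset A z hAz, ← hWa]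
  rw [hq', hW']
  intro heq
  have hSne : SR = SA := by
    have h1 : q.eval z * W.eval z * SR = q.eval z * W.eval z * SA := by ring_nf; ring_nf at heq; linear_combination heq
    exact mul_left_cancel₀ (mul_ne_zero hqz hWz) h1
  -- real part comparison
  have hre : ((R.map fun b => z / (z - b)).sum).re = ((A.map fun b => z / (z - b)).sum).re := by
    have : ∀ M : Multiset ℂ, (M.map fun b => z / (z - b)).sum = z * (M.map fun b => (z - b)⁻¹).sum := by
      intro M
      rw [← Multiset.sum_map_mul_left]
      exact congrArg Multiset.sum (Multiset.map_congr rfl fun b _ => (div_eq_mul_inv z (z - b)))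
    rw [this R, this A, ← hSR, ← hSA, hSne]
  rw [multiset_re_sum, multiset_re_sum, Multiset.map_map, Multiset.map_map] at hre
  have hlt : (n : ℝ) * (1/2) < (R.map fun b => (Complex.re ∘ fun b => z / (z - b)) b).sum := by
    have := multiset_card_mul_lt_sum (M := R.map fun b => (Complex.re ∘ fun b => z / (z - b)) b)
      (c := 1/2) ?_ ?_
    · rwa [Multiset.card_map, hRcard] at this
    · intro x hx
      obtain ⟨b, hb, rfl⟩ := Multiset.mem_map.mp hx
      exact re_div_gt_half hz (hRmem b hb)
    · intro h0
      have := Multiset.card_eq_zero.mpr h0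
      rw [Multiset.card_map, hRcard] at this
      omega
  have hle : (A.map fun b => (Complex.re ∘ fun b => z / (z - b)) b).sum ≤ (n : ℝ) * (1/2) := by
    have := multiset_sum_le_card_mul (M := A.map fun b => (Complex.re ∘ fun b => z / (z - b)) b)
      (c := 1/2) ?_
    · rwa [Multiset.card_map, hAcard] at this
    · intro x hx
      obtain ⟨b, hb, rfl⟩ := Multiset.mem_map.mp hx
      exact le_of_lt (re_div_lt_half hz (hAmem b hb))
  rw [hre] at hlt
  linarith



lemma abs_one_sub_conj_mul' {z a : ℂ} (hz : Complex.abs z = 1) :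
    Complex.abs (1 - (starRingEnd ℂ) a * z) = Complex.abs (z - a) := by
  have h : 1 - (starRingEnd ℂ) a * z = z * (starRingEnd ℂ) (z - a) := by
    have hn : (Complex.normSq z : ℂ) = 1 := by
      rw [Complex.normSq_eq_abs, hz]; norm_num
    rw [map_sub, mul_sub, Complex.mul_conj, hn]; ring

  rw [h, map_mul, hz, Complex.abs_conj, one_mul]

noncomputable def phat (p : Polynomial ℂ) (n : ℕ) : Polynomial ℂ :=
  ∑ k ∈ Finset.range (n+1), C (p.coeff k) * X ^ (n - k)

lemma phat_eval {p : Polynomial ℂ} {n : ℕ} (hdeg : p.natDegree ≤ n) {u : ℂ} (hu : u ≠ 0) :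
    (phat p n).eval u = u ^ n * p.eval u⁻¹ := by
  rw [phat, Polynomial.eval_finset_sum,
    Polynomial.eval_eq_sum_range' (Nat.lt_succ_of_le hdeg), Finset.mul_sum]
  refine Finset.sum_congr rfl fun k hk => ?_
  rw [Finset.mem_range, Nat.lt_succ_iff] at hk
  rw [eval_mul, eval_C, eval_pow, eval_X, pow_sub₀ u hu hk]
  field_simp
  rw [mul_assoc, ← mul_pow]; simp [hu]

lemma phat_eval_zero {p : Polynomial ℂ} {n : ℕ} : (phat p n).eval 0 = p.coeff n := by
  rw [phat, Polynomial.eval_finset_sum]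
  rw [Finset.sum_eq_single n]
  · simp
  · intro k hk hkn
    rw [Finset.mem_range, Nat.lt_succ_iff] at hk
    have : 0 < n - k := by omega
    simp [eval_mul, eval_pow, zero_pow (by omega : n - k ≠ 0)]
  · intro h
    exact absurd (Finset.mem_range.mpr (Nat.lt_succ_self n)) h

lemma bound_outside (n : ℕ) (a : Fin n → ℂ) (ha : ∀ j, 1 < Complex.abs (a j))
    (p : Polynomial ℂ) (hdeg : p.natDegree ≤ n) (N : ℝ)
    (hbdd : ∀ ζ : ℂ, Complex.abs ζ = 1 →
      Complex.abs (p.eval ζ) ≤ N * ∏ j, Complex.abs (ζ - a j)) :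
    ∀ v : ℂ, 1 ≤ Complex.abs v →
      Complex.abs (p.eval v) ≤ N * ∏ j, Complex.abs (1 - (starRingEnd ℂ) (a j) * v) := by
  set Rp : Polynomial ℂ := ∏ j, (X - C ((starRingEnd ℂ) (a j))) with hRp
  have hReval : ∀ u : ℂ, Rp.eval u = ∏ j, (u - (starRingEnd ℂ) (a j)) := by
    intro u; simp [hRp, Polynomial.eval_prod]
  have hRne : ∀ u : ℂ, Complex.abs u ≤ 1 → Rp.eval u ≠ 0 := by
    intro u hu
    rw [hReval]
    refine Finset.prod_ne_zero_iff.mpr fun j _ => ?_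
    intro h0
    rw [sub_eq_zero] at h0
    rw [h0] at hu
    rw [Complex.abs_conj] at hu
    linarith [ha j]
  have hRu : ∀ u : ℂ, u ≠ 0 →
      Rp.eval u = u ^ n * ∏ j, (1 - (starRingEnd ℂ) (a j) * u⁻¹) := by
    intro u hu
    rw [hReval]
    calc ∏ j, (u - (starRingEnd ℂ) (a j))
        = ∏ j, (u * (1 - (starRingEnd ℂ) (a j) * u⁻¹)) := by
          refine Finset.prod_congr rfl fun j _ => ?_
          field_simp
      _ = (∏ _j : Fin n, u) * ∏ j, (1 - (starRingEnd ℂ) (a j) * u⁻¹) :=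
          Finset.prod_mul_distrib
      _ = u ^ n * ∏ j, (1 - (starRingEnd ℂ) (a j) * u⁻¹) := by
          rw [Finset.prod_const, Finset.card_univ, Fintype.card_fin]
  -- the holomorphic function g(u) = u^n p(1/u) / prod (u - conj a_j)
  set g : ℂ → ℂ := fun u => (phat p n).eval u / Rp.eval u with hg
  have hdiff : DiffContOnCl ℂ g (Metric.ball 0 1) := by
    apply DifferentiableOn.diffContOnCl
    rw [closure_ball (0:ℂ) one_ne_zero]
    intro u hu
    have hu1 : Complex.abs u ≤ 1 := by
      rw [Metric.mem_closedBall, dist_zero_right, Complex.norm_eq_abs] at hu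
      exact hu
    exact (((phat p n).differentiableAt).div (Rp.differentiableAt)
      (hRne u hu1)).differentiableWithinAt
  have hfront : ∀ u ∈ frontier (Metric.ball (0:ℂ) 1), ‖g u‖ ≤ N := by
    intro u hu
    rw [frontier_ball (0:ℂ) one_ne_zero, mem_sphere_zero_iff_norm] at hu
    have hu1 : Complex.abs u = 1 := hu
    have hu0 : u ≠ 0 := by
      intro h; rw [h] at hu1; simp at hu1
    have hz1 : Complex.abs u⁻¹ = 1 := by rw [map_inv₀, hu1, inv_one]
    have hgz : g u = p.eval u⁻¹ / ∏ j, (1 - (starRingEnd ℂ) (a j) * u⁻¹) := by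
      rw [hg]
      simp only
      rw [phat_eval hdeg hu0, hRu u hu0]
      exact mul_div_mul_left _ _ (pow_ne_zero n hu0)
    have hQabs : Complex.abs (∏ j, (1 - (starRingEnd ℂ) (a j) * u⁻¹)) =
        ∏ j, Complex.abs (u⁻¹ - a j) := by
      rw [map_prod]
      exact Finset.prod_congr rfl fun j _ => abs_one_sub_conj_mul' hz1
    have hQpos : 0 < ∏ j, Complex.abs (u⁻¹ - a j) := by
      refine Finset.prod_pos fun j _ => ?_
      rw [AbsoluteValue.pos_iff]
      intro h0
      rw [sub_eq_zero] at h0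
      rw [h0] at hz1
      linarith [ha j]
    rw [Complex.norm_eq_abs, hgz, map_div₀, hQabs, div_le_iff₀ hQpos]
    exact hbdd u⁻¹ hz1
  have hmax : ∀ u ∈ Metric.closedBall (0:ℂ) 1, ‖g u‖ ≤ N := by
    intro u hu
    refine Complex.norm_le_of_forall_mem_frontier_norm_le Metric.isBounded_ball hdiff hfront ?_
    rwa [closure_ball (0:ℂ) one_ne_zero]
  -- conclusion
  intro v hv
  have hv0 : v ≠ 0 := by
    intro h; rw [h] at hv; simp at hv; linarith
  have hu1 : Complex.abs v⁻¹ ≤ 1 := by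
    rw [map_inv₀]
    exact inv_le_one_of_one_le₀ hv
  have hu0 : v⁻¹ ≠ 0 := inv_ne_zero hv0
  have hle := hmax v⁻¹ (Metric.mem_closedBall.mpr
    (by rw [dist_zero_right, Complex.norm_eq_abs]; exact hu1))
  have hgu : g v⁻¹ = p.eval v / ∏ j, (1 - (starRingEnd ℂ) (a j) * v) := by
    rw [hg]
    simp only
    rw [phat_eval hdeg hu0, hRu v⁻¹ hu0, inv_inv]
    exact mul_div_mul_left _ _ (pow_ne_zero n hu0)
  have hQne : (∏ j, (1 - (starRingEnd ℂ) (a j) * v)) ≠ 0 := by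
    have h1 := hRne v⁻¹ hu1
    rw [hRu v⁻¹ hu0, inv_inv] at h1
    exact right_ne_zero_of_mul h1
  have hQpos : 0 < Complex.abs (∏ j, (1 - (starRingEnd ℂ) (a j) * v)) :=
    AbsoluteValue.pos _ hQne
  rw [Complex.norm_eq_abs, hgu, map_div₀, div_le_iff₀ hQpos] at hle
  calc Complex.abs (p.eval v) ≤ N * Complex.abs (∏ j, (1 - (starRingEnd ℂ) (a j) * v)) := hle
    _ = N * ∏ j, Complex.abs (1 - (starRingEnd ℂ) (a j) * v) := by rw [map_prod]

lemma Rp_eval_identity (n : ℕ) (a : Fin n → ℂ) (u : ℂ) (hu : u ≠ 0) :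
    (∏ j, (X - C ((starRingEnd ℂ) (a j))) : Polynomial ℂ).eval u =
      u ^ n * ∏ j, (1 - (starRingEnd ℂ) (a j) * u⁻¹) := by
  rw [Polynomial.eval_prod]
  simp only [eval_sub, eval_X, eval_C]
  calc ∏ j, (u - (starRingEnd ℂ) (a j))
      = ∏ j, (u * (1 - (starRingEnd ℂ) (a j) * u⁻¹)) := by
        refine Finset.prod_congr rfl fun j _ => ?_
        field_simp
    _ = (∏ _j : Fin n, u) * ∏ j, (1 - (starRingEnd ℂ) (a j) * u⁻¹) :=
        Finset.prod_mul_distrib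
    _ = u ^ n * ∏ j, (1 - (starRingEnd ℂ) (a j) * u⁻¹) := by
        rw [Finset.prod_const, Finset.card_univ, Fintype.card_fin]


theorem bernstein_rational
    (n : ℕ) (a : Fin n → ℂ) (ha : ∀ j, 1 < ‖a j‖)
    (w B : ℂ → ℂ)
    (hw : ∀ z, w z = ∏ j, (z - a j))
    (hB : ∀ z, B z = ∏ j, (1 - (starRingEnd ℂ) (a j) * z) / (z - a j))
    (p : Polynomial ℂ) (hdeg : p.natDegree ≤ n)
    (r : ℂ → ℂ) (hr : ∀ z, r z = p.eval z / w z)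
    (N : ℝ) (hN : IsGreatest ((fun ζ => ‖r ζ‖) '' Metric.sphere (0 : ℂ) 1) N)
    (z : ℂ) (hz : ‖z‖ = 1) :
    ‖deriv r z‖ ≤ ‖deriv B z‖ * N := by
  simp only [Complex.norm_eq_abs] at ha hN hz ⊢
  have hN0 : 0 ≤ N := by
    obtain ⟨ζ, _, hζ⟩ := hN.1
    rw [← hζ]
    exact AbsoluteValue.nonneg _ _
  -- trivial case n = 0
  rcases Nat.eq_zero_or_pos n with hn0 | hn
  · subst hn0
    have hp0 : p = C (p.coeff 0) := Polynomial.eq_C_of_natDegree_le_zero hdeg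
    have hrc : r = fun _ => p.coeff 0 := by
      funext v
      rw [hr, hw, hp0]
      simp
    rw [hrc, deriv_const]
    simp only [map_zero]
    positivity
  -- nonvanishing of w on/near the circle
  have hwne : ∀ v : ℂ, Complex.abs v ≤ 1 → w v ≠ 0 := by
    intro v hv
    rw [hw]
    refine Finset.prod_ne_zero_iff.mpr fun j _ => ?_
    intro h0
    rw [sub_eq_zero] at h0
    rw [h0] at hv
    linarith [ha j]
  -- trivial case N = 0
  rcases eq_or_lt_of_le hN0 with hN0' | hNpos
  · have hp0 : p = 0 := by
      apply Polynomial.eq_zero_of_infinite_isRoot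
      have hIoo : (Set.Ioo (-1 : ℝ) 1).Infinite := Set.Ioo_infinite (by norm_num : (-1:ℝ) < 1)
      set f : ℝ → ℂ := fun x => (x : ℂ) + (Real.sqrt (1 - x ^ 2) : ℂ) * Complex.I with hf
      have hre : ∀ x : ℝ, (f x).re = x := by intro x; simp [hf]
      have hinj : Set.InjOn f (Set.Ioo (-1 : ℝ) 1) := by
        intro x _ y _ hxy
        have := congrArg Complex.re hxy
        rwa [hre, hre] at this
      have habs : ∀ x ∈ Set.Ioo (-1 : ℝ) 1, Complex.abs (f x) = 1 := by
        intro x hx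
        obtain ⟨hx1, hx2⟩ := hx
        have h1 : (0:ℝ) ≤ 1 - x ^ 2 := by nlinarith
        have him : (f x).im = Real.sqrt (1 - x ^ 2) := by simp [hf]
        rw [Complex.abs_apply, Complex.normSq_apply, hre, him, Real.mul_self_sqrt h1]
        rw [show x * x + (1 - x ^ 2) = 1 by ring, Real.sqrt_one]
      refine Set.Infinite.mono ?_ (hIoo.image hinj)
      rintro v ⟨x, hx, rfl⟩
      have h1 : Complex.abs (r (f x)) ≤ N :=
        hN.2 ⟨f x, mem_sphere_zero_iff_norm.mpr (habs x hx), rfl⟩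
      rw [← hN0'] at h1
      have h2 : r (f x) = 0 := by
        have := AbsoluteValue.nonneg Complex.abs (r (f x))
        have h3 : Complex.abs (r (f x)) = 0 := le_antisymm h1 this
        exact (AbsoluteValue.eq_zero _).mp h3
      rw [hr] at h2
      have hwv : w (f x) ≠ 0 := hwne _ (le_of_eq (habs x hx))
      simpa [Polynomial.IsRoot, _root_.div_eq_zero_iff, hwv] using h2
    have hrc : r = fun _ => (0 : ℂ) := by
      funext v
      rw [hr, hp0]
      simp
    rw [hrc, deriv_const, ← hN0']
    simp
  -- main case
  have hmemz : ∀ j, z - a j ≠ 0 := by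
    intro j h0
    rw [sub_eq_zero] at h0
    rw [h0] at hz
    linarith [ha j]
  set W : Polynomial ℂ := ∏ j, (X - C (a j)) with hWdef
  have hWeval : ∀ v, W.eval v = w v := by
    intro v; rw [hw]; simp [hWdef, Polynomial.eval_prod]
  have hwz : W.eval z ≠ 0 := by rw [hWeval]; exact hwne z (le_of_eq hz)
  have hrW : r = fun v => p.eval v / W.eval v := by
    funext v; rw [hr, hWeval]
  -- the polynomial Q
  set Q : Polynomial ℂ := ∏ j, (1 - C ((starRingEnd ℂ) (a j)) * X) with hQdef
  have hQeval : ∀ v, Q.eval v = ∏ j, (1 - (starRingEnd ℂ) (a j) * v) := by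
    intro v; simp [hQdef, Polynomial.eval_prod]
  have haj0 : ∀ j, -((starRingEnd ℂ) (a j)) ≠ 0 := by
    intro j h0
    rw [neg_eq_zero] at h0
    have := ha j
    rw [← Complex.abs_conj, h0] at this
    simp at this; linarith
  have hQfac : ∀ j, (1 - C ((starRingEnd ℂ) (a j)) * X : Polynomial ℂ) =
      C (-((starRingEnd ℂ) (a j))) * X + C 1 := by
    intro j; rw [map_neg, map_one]; ring
  have hQfacne : ∀ j, (1 - C ((starRingEnd ℂ) (a j)) * X : Polynomial ℂ) ≠ 0 := by
    intro j h0
    have := Polynomial.natDegree_linear (b := (1:ℂ)) (haj0 j)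
    rw [← hQfac j, h0] at this
    simp at this
  have hQdeg : Q.natDegree = n := by
    rw [hQdef, Polynomial.natDegree_prod _ _ (fun j _ => hQfacne j)]
    have : ∀ j : Fin n, (1 - C ((starRingEnd ℂ) (a j)) * X : Polynomial ℂ).natDegree = 1 := by
      intro j
      rw [hQfac j]
      exact Polynomial.natDegree_linear (haj0 j)
    simp [this]
  have hQcoeff : Q.coeff n = ∏ j, -((starRingEnd ℂ) (a j)) := by
    have h1 : Q.coeff n = Q.leadingCoeff := by rw [Polynomial.leadingCoeff, hQdeg]
    rw [h1, hQdef, Polynomial.leadingCoeff_prod]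
    refine Finset.prod_congr rfl fun j _ => ?_
    rw [hQfac j]
    exact Polynomial.leadingCoeff_linear (haj0 j)
  have hQvne : ∀ v : ℂ, 1 ≤ Complex.abs v → Q.eval v ≠ 0 := by
    intro v hv
    rw [hQeval]
    refine Finset.prod_ne_zero_iff.mpr fun j _ => ?_
    intro h0
    have h1 : (starRingEnd ℂ) (a j) * v = 1 := by
      rw [sub_eq_zero] at h0; exact h0.symm
    have h2 := congrArg Complex.abs h1
    rw [map_mul, map_one, Complex.abs_conj] at h2
    nlinarith [ha j, AbsoluteValue.nonneg Complex.abs v]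
  have hQroots : ∀ v, Q.eval v = 0 → Complex.abs v < 1 := by
    intro v h0
    by_contra hv
    push_neg at hv
    exact hQvne v hv h0
  -- derivative of B at z
  have hU : IsOpen {v : ℂ | W.eval v ≠ 0} := by
    have : {v : ℂ | W.eval v ≠ 0} = (fun v => W.eval v) ⁻¹' ({0}ᶜ) := rfl
    rw [this]
    exact IsOpen.preimage (Polynomial.continuous W) isOpen_compl_singleton
  have hBv : ∀ v : ℂ, W.eval v ≠ 0 → B v = Q.eval v / W.eval v := by
    intro v hv
    rw [hB, hQeval, hWeval, hw, ← Finset.prod_div_distrib]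
  have hBeq : B =ᶠ[nhds z] fun v => Q.eval v / W.eval v := by
    filter_upwards [hU.mem_nhds hwz] with v hv
    exact hBv v hv
  have hBd : HasDerivAt (fun v => Q.eval v / W.eval v)
      (((derivative Q).eval z * W.eval z - Q.eval z * (derivative W).eval z) / (W.eval z) ^ 2) z :=
    (Q.hasDerivAt z).div (W.hasDerivAt z) hwz
  have hderivB : deriv B z =
      ((derivative Q).eval z * W.eval z - Q.eval z * (derivative W).eval z) / (W.eval z) ^ 2 := by
    rw [Filter.EventuallyEq.deriv_eq hBeq]
    exact hBd.deriv
  have hBne : deriv B z ≠ 0 := by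
    rw [hderivB]
    exact div_ne_zero (sub_ne_zero.mpr (key_nonvanishing n hn a ha Q hQdeg hQroots z hz))
      (pow_ne_zero 2 hwz)
  -- derivative of r at z
  have hrd : HasDerivAt r
      (((derivative p).eval z * W.eval z - p.eval z * (derivative W).eval z) / (W.eval z) ^ 2) z := by
    rw [hrW]
    exact (p.hasDerivAt z).div (W.hasDerivAt z) hwz
  -- suppose the conclusion fails
  by_contra hcon
  push_neg at hcon
  set lam : ℂ := deriv r z / deriv B z with hlam
  have hlamB : lam * deriv B z = deriv r z := div_mul_cancel₀ _ hBne
  have hlamN : N < Complex.abs lam := by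
    rw [hlam, map_div₀, lt_div_iff₀ (AbsoluteValue.pos _ hBne)]
    linarith [hcon, mul_comm (Complex.abs (deriv B z)) N]
  -- boundary bound for p
  have hbdd : ∀ ζ : ℂ, Complex.abs ζ = 1 →
      Complex.abs (p.eval ζ) ≤ N * ∏ j, Complex.abs (ζ - a j) := by
    intro ζ hζ
    have h1 : Complex.abs (r ζ) ≤ N :=
      hN.2 ⟨ζ, mem_sphere_zero_iff_norm.mpr hζ, rfl⟩
    rw [hr, hw] at h1
    have hpr : Complex.abs (∏ j, (ζ - a j)) = ∏ j, Complex.abs (ζ - a j) := map_prod _ _ _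
    have hpos : 0 < ∏ j, Complex.abs (ζ - a j) := by
      rw [← hpr]
      refine AbsoluteValue.pos _ ?_
      have := hwne ζ (le_of_eq hζ)
      rwa [hw] at this
    rw [map_div₀, hpr, div_le_iff₀ hpos] at h1
    exact h1
  have houts := bound_outside n a ha p hdeg N hbdd
  -- the auxiliary polynomial q
  set q : Polynomial ℂ := C lam * Q - p with hqdef
  have hqe : ∀ v, q.eval v = lam * Q.eval v - p.eval v := by
    intro v; simp [hqdef]
  have hqroots : ∀ v, q.eval v = 0 → Complex.abs v < 1 := by
    intro v h0
    by_contra hv1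
    push_neg at hv1
    have h1 : lam * Q.eval v = p.eval v := by
      have h := hqe v
      rw [h0] at h
      exact sub_eq_zero.mp h.symm
    have h2 := houts v hv1
    have h3 : Complex.abs (∏ j, (1 - (starRingEnd ℂ) (a j) * v)) =
        ∏ j, Complex.abs (1 - (starRingEnd ℂ) (a j) * v) := map_prod _ _ _
    have hQv : Q.eval v ≠ 0 := hQvne v hv1
    have hQvpos : 0 < Complex.abs (Q.eval v) := AbsoluteValue.pos _ hQv
    have h4 : Complex.abs lam * Complex.abs (Q.eval v) ≤ N * Complex.abs (Q.eval v) := by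
      calc Complex.abs lam * Complex.abs (Q.eval v) = Complex.abs (p.eval v) := by
            rw [← map_mul, h1]
        _ ≤ N * ∏ j, Complex.abs (1 - (starRingEnd ℂ) (a j) * v) := h2
        _ = N * Complex.abs (Q.eval v) := by rw [hQeval, ← h3]
    nlinarith
  -- coefficient n of q is nonzero (reversal + continuity argument)
  set Rp : Polynomial ℂ := ∏ j, (X - C ((starRingEnd ℂ) (a j))) with hRpdef
  have hRp0 : Rp.eval 0 = ∏ j, -((starRingEnd ℂ) (a j)) := by
    simp [hRpdef, Polynomial.eval_prod]
  have hRp0ne : Rp.eval 0 ≠ 0 := by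
    rw [hRp0]
    exact Finset.prod_ne_zero_iff.mpr fun j _ => haj0 j
  set F : ℂ → ℝ := fun u => Complex.abs (lam * Rp.eval u - (phat p n).eval u) -
      (Complex.abs lam - N) * Complex.abs (Rp.eval u) with hFdef
  have hFcont : Continuous F := by
    have c1 : Continuous fun u : ℂ => lam * Rp.eval u - (phat p n).eval u :=
      (continuous_const.mul (Polynomial.continuous Rp)).sub (Polynomial.continuous _)
    exact (Complex.continuous_abs.comp c1).sub
      (continuous_const.mul (Complex.continuous_abs.comp (Polynomial.continuous Rp)))
  have hFnn : ∀ u : ℂ, u ≠ 0 → Complex.abs u ≤ 1 → 0 ≤ F u := by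
    intro u hu hu1
    have hupos : 0 < Complex.abs u := AbsoluteValue.pos _ hu
    have hv1 : 1 ≤ Complex.abs u⁻¹ := by
      rw [map_inv₀]
      exact (one_le_inv₀ hupos).mpr hu1
    have hid := Rp_eval_identity n a u hu
    have hph := phat_eval hdeg hu
    have hQinv : Q.eval u⁻¹ = ∏ j, (1 - (starRingEnd ℂ) (a j) * u⁻¹) := hQeval u⁻¹
    have hcomb : lam * Rp.eval u - (phat p n).eval u =
        u ^ n * (lam * Q.eval u⁻¹ - p.eval u⁻¹) := by
      rw [hid, hph, hQinv]; ring
    have habs1 : Complex.abs (lam * Rp.eval u - (phat p n).eval u) =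
        Complex.abs u ^ n * Complex.abs (lam * Q.eval u⁻¹ - p.eval u⁻¹) := by
      rw [hcomb, map_mul, map_pow]
    have habs2 : Complex.abs (Rp.eval u) = Complex.abs u ^ n * Complex.abs (Q.eval u⁻¹) := by
      rw [hid, ← hQinv, map_mul, map_pow]
    have ht : Complex.abs (lam * Q.eval u⁻¹) - Complex.abs (p.eval u⁻¹) ≤
        Complex.abs (lam * Q.eval u⁻¹ - p.eval u⁻¹) := by
      simpa [Complex.norm_eq_abs] using
        norm_sub_norm_le (lam * Q.eval u⁻¹) (p.eval u⁻¹)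
    have hp_le : Complex.abs (p.eval u⁻¹) ≤ N * Complex.abs (Q.eval u⁻¹) := by
      have h := houts u⁻¹ hv1
      rw [hQinv, map_prod]
      exact h
    have hmm : Complex.abs (lam * Q.eval u⁻¹) =
        Complex.abs lam * Complex.abs (Q.eval u⁻¹) := map_mul _ _ _
    have hun : (0:ℝ) ≤ Complex.abs u ^ n := by positivity
    rw [hFdef]
    simp only
    rw [habs1, habs2]
    nlinarith [AbsoluteValue.nonneg Complex.abs (Q.eval u⁻¹)]
  have hF0 : 0 ≤ F 0 := by
    have htend : Filter.Tendsto F (nhdsWithin 0 {(0:ℂ)}ᶜ) (nhds (F 0)) :=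
      (hFcont.tendsto 0).mono_left nhdsWithin_le_nhds
    refine ge_of_tendsto htend ?_
    have hball : Metric.ball (0:ℂ) 1 ∈ nhdsWithin (0:ℂ) {(0:ℂ)}ᶜ :=
      mem_nhdsWithin_of_mem_nhds (Metric.ball_mem_nhds 0 one_pos)
    filter_upwards [hball, self_mem_nhdsWithin] with u hu hu0
    refine hFnn u hu0 (le_of_lt ?_)
    rwa [Metric.mem_ball, dist_zero_right, Complex.norm_eq_abs] at hu
  have hcoeffval : q.coeff n = lam * Rp.eval 0 - p.coeff n := by
    rw [hqdef]
    rw [Polynomial.coeff_sub, Polynomial.coeff_C_mul, hQcoeff, hRp0]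
  have hcoeff : q.coeff n ≠ 0 := by
    intro h0
    have hF0v : F 0 = Complex.abs (lam * Rp.eval 0 - (phat p n).eval 0) -
        (Complex.abs lam - N) * Complex.abs (Rp.eval 0) := rfl
    rw [phat_eval_zero] at hF0v
    have heq : lam * Rp.eval 0 - (p.coeff n : ℂ) = q.coeff n := hcoeffval.symm
    rw [heq, h0, map_zero] at hF0v
    have hpos : 0 < (Complex.abs lam - N) * Complex.abs (Rp.eval 0) :=
      mul_pos (by linarith) (AbsoluteValue.pos _ hRp0ne)
    rw [hF0v] at hF0
    linarith
  have hqdeg : q.natDegree = n := by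
    refine le_antisymm ?_ (Polynomial.le_natDegree_of_ne_zero hcoeff)
    rw [hqdef]
    refine le_trans (Polynomial.natDegree_sub_le _ _) (max_le ?_ hdeg)
    exact le_trans (Polynomial.natDegree_C_mul_le _ _) (le_of_eq hQdeg)
  -- final contradiction
  have hkey := key_nonvanishing n hn a ha q hqdeg hqroots z hz
  have hFd : HasDerivAt (fun v => q.eval v / W.eval v)
      (((derivative q).eval z * W.eval z - q.eval z * (derivative W).eval z) / (W.eval z) ^ 2) z :=
    (q.hasDerivAt z).div (W.hasDerivAt z) hwz
  have hFeq : (fun v => q.eval v / W.eval v) =ᶠ[nhds z] fun v => lam * B v - r v := by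
    filter_upwards [hU.mem_nhds hwz] with v hv
    rw [hqe v, hBv v hv, hrW]
    rw [sub_div, mul_div_assoc]
  have hBdiff : DifferentiableAt ℂ B z :=
    (Filter.EventuallyEq.differentiableAt_iff hBeq).mpr hBd.differentiableAt
  have hd0 : deriv (fun v => q.eval v / W.eval v) z = 0 := by
    rw [Filter.EventuallyEq.deriv_eq hFeq,
      deriv_fun_sub (hBdiff.const_mul lam) hrd.differentiableAt,
      deriv_const_mul lam hBdiff, hlamB, sub_self]
  have hd1 := hFd.deriv
  rw [hd0] at hd1
  exact (div_ne_zero (sub_ne_zero.mpr hkey) (pow_ne_zero 2 hwz)) hd1.symm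
end
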